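/- If m + n = |Q| for two distinct relational paths P, Q with |Q| ≤ |P| (m = LLRSP(P,Q), n = LLRSP(P̃,Q̃)), then |P| ≥ |Q| + 2. -/
import Mathlib


/-- Kinds of item classes in a relational schema. -/
inductive ItemKind | entity | relationship
deriving DecidableEq

/-- Cardinalities. -/
inductive Card | one | many
deriving DecidableEq

/-- A relational schema: item classes with kinds, participation of entity
classes in relationship classes, and a cardinality function `card R E`. -/
structure Schema where
  Class : Type
  kind : Class → ItemKind
  participates : Class → Class → Prop   -- `participates E R`
  card : Class → Class → Card           -- `card R E`

namespace Schema

/-- Condition (1) of relational paths: alternation between entity and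
relationship classes, with participation at each consecutive pair. -/
def Alternates (S : Schema) (P : List S.Class) : Prop :=
  ∀ i a b, P[i]? = some a → P[i+1]? = some b →
    ((S.kind a = .entity ∧ S.kind b = .relationship ∧ S.participates a b) ∨
     (S.kind a = .relationship ∧ S.kind b = .entity ∧ S.participates b a))

/-- Condition (2): in every subsequence `[E, R, E']`, `E ≠ E'`. -/
def NoERE (S : Schema) (P : List S.Class) : Prop :=
  ∀ i a b c, P[i]? = some a → P[i+1]? = some b → P[i+2]? = some c →
    S.kind a = .entity → a ≠ c

/-- Condition (3): in every subsequence `[R, E, R']` with `R = R'`,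
`card (R, E) = many`. -/
def CardMany (S : Schema) (P : List S.Class) : Prop :=
  ∀ i a b c, P[i]? = some a → P[i+1]? = some b → P[i+2]? = some c →
    S.kind a = .relationship → a = c → S.card a b = .many

/-- A valid relational path. -/
def ValidPath (S : Schema) (P : List S.Class) : Prop :=
  P ≠ [] ∧ S.Alternates P ∧ S.NoERE P ∧ S.CardMany P

end Schema

/-- A relational skeleton instantiating a schema: items with classes and a
symmetric adjacency relation, respecting participation and cardinality
constraints (`card = one` forces at most one adjacent relationship instance;
relationship instances have exactly one adjacent entity instance per
participating entity class). -/
structure Skeleton (S : Schema) where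
  Item : Type
  classOf : Item → S.Class
  adj : Item → Item → Prop
  adj_symm : ∀ {i j}, adj i j → adj j i
  adj_alt : ∀ {i j}, adj i j →
    (S.kind (classOf i) = .entity ∧ S.kind (classOf j) = .relationship ∧
      S.participates (classOf i) (classOf j)) ∨
    (S.kind (classOf i) = .relationship ∧ S.kind (classOf j) = .entity ∧
      S.participates (classOf j) (classOf i))
  card_one : ∀ {e r r'}, S.kind (classOf e) = .entity →
    S.card (classOf r) (classOf e) = .one → classOf r = classOf r' →
    adj e r → adj e r' → r = r'
  rel_unique : ∀ {r i j}, S.kind (classOf r) = .relationship →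
    adj r i → adj r j → classOf i = classOf j → i = j
  rel_total : ∀ {r E}, S.kind (classOf r) = .relationship →
    S.participates E (classOf r) → ∃ e, classOf e = E ∧ adj r e

namespace Skeleton

variable {S : Schema} (σ : Skeleton S)

/-- Auxiliary recursion for terminal sets under bridge burning semantics:
`(tsetAux P b ℓ).1` is the terminal set `P^{1:ℓ+1}|_b` (0-indexed `ℓ`) and
`(tsetAux P b ℓ).2` is the set of all items visited up to step `ℓ`. -/
def tsetAux (P : List S.Class) (b : σ.Item) : ℕ → Set σ.Item × Set σ.Item
  | 0 => ({b}, {b})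
  | ℓ+1 =>
      let prev := tsetAux P b ℓ
      let cur : Set σ.Item :=
        {i | P[ℓ+1]? = some (σ.classOf i) ∧ (∃ j ∈ prev.1, σ.adj i j) ∧
             i ∉ prev.2}
      (cur, prev.2 ∪ cur)

/-- The terminal set `P^{1:ℓ+1}|_b` (so `ℓ` is 0-indexed: `tset P b 0 = {b}`). -/
def tset (P : List S.Class) (b : σ.Item) (ℓ : ℕ) : Set σ.Item :=
  (σ.tsetAux P b ℓ).1

/-- The (full) terminal set `P|_b`. -/
def tfull (P : List S.Class) (b : σ.Item) : Set σ.Item :=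
  σ.tset P b (P.length - 1)

end Skeleton

/-- `LLRSP(P,Q)`: the length of the longest required shared path: the largest
`ℓ ≥ 1` such that `P^{1:ℓ} = Q^{1:ℓ}` and in every skeleton, from every base,
the terminal set of the length-`ℓ` prefix is a singleton. -/
noncomputable def llrsp (S : Schema) (P Q : List S.Class) : ℕ :=
  sSup {ℓ | 1 ≤ ℓ ∧ ℓ ≤ P.length ∧ P.take ℓ = Q.take ℓ ∧
    ∀ (σ : Skeleton S) (b : σ.Item), P[0]? = some (σ.classOf b) →
      ∃ x, σ.tset P b (ℓ-1) = {x}}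

/-- flip of an ItemKind -/
def ItemKind.flip : ItemKind → ItemKind
  | .entity => .relationship
  | .relationship => .entity

lemma kind_parity {S : Schema} {P : List S.Class} (hA : S.Alternates P) :
    ∀ i (hi : i < P.length), S.kind P[i] = ItemKind.flip^[i] (S.kind P[0]) := by
  intro i
  induction i with
  | zero => intro _; simp
  | succ k ih =>
    intro hk
    have hk' : k < P.length := Nat.lt_of_succ_lt hk
    have h1 : P[k]? = some P[k] := List.getElem?_eq_getElem hk'
    have h2 : P[k+1]? = some P[k+1] := List.getElem?_eq_getElem hk
    have := hA k _ _ h1 h2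
    rw [Function.iterate_succ_apply', ← ih hk']
    rcases this with ⟨ha, hb, _⟩ | ⟨ha, hb, _⟩ <;> rw [ha, hb] <;> rfl

lemma flip_iterate_inj (x : ItemKind) {i j : ℕ}
    (h : ItemKind.flip^[i] x = ItemKind.flip^[j] x) : i % 2 = j % 2 := by
  have key : ∀ k, ItemKind.flip^[k] x = ItemKind.flip^[k % 2] x := by
    intro k
    induction k using Nat.strong_induction_on with
    | _ k ih =>
      match k with
      | 0 => rfl
      | 1 => rfl
      | (n+2) =>
        have : ItemKind.flip^[n+2] x = ItemKind.flip^[n] x := by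
          rw [show n + 2 = n + 1 + 1 from rfl, Function.iterate_succ_apply',
            Function.iterate_succ_apply']
          cases (ItemKind.flip^[n] x) <;> rfl
        rw [this, ih n (by omega), Nat.add_mod_right]
  rw [key i, key j] at h
  have hfx : ItemKind.flip x ≠ x := by cases x <;> simp [ItemKind.flip]
  rcases Nat.mod_two_eq_zero_or_one i with hi | hi <;>
    rcases Nat.mod_two_eq_zero_or_one j with hj | hj <;>
      rw [hi, hj] at h ⊢ <;> simp only [Function.iterate_one, Function.iterate_zero, id] at h <;>
        first | rfl | exact absurd h.symm hfx | exact absurd h hfx.symm | exact absurd h hfx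

/-- if `LLRSP(P,Q) + LLRSP(P̃,Q̃) = |Q|` for distinct valid
relational paths `P`, `Q` with common perspective and terminal class and
`|Q| ≤ |P|`, then `|P| ≥ |Q| + 2`. -/
theorem length_ge_add_two_of_llrsp_eq (S : Schema) (P Q : List S.Class)
    (hP : S.ValidPath P) (hQ : S.ValidPath Q) (hne : P ≠ Q)
    (hhead : P[0]? = Q[0]?) (hlast : P.getLast? = Q.getLast?)
    (hlen : Q.length ≤ P.length)
    (h : llrsp S P Q + llrsp S P.reverse Q.reverse = Q.length) :
    Q.length + 2 ≤ P.length := by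
  obtain ⟨hPne, hPA, -, -⟩ := hP
  obtain ⟨hQne, hQA, -, -⟩ := hQ
  have hPpos : 0 < P.length := List.length_pos_iff.mpr hPne
  have hQpos : 0 < Q.length := List.length_pos_iff.mpr hQne
  -- Step 1: same parity of lengths
  have hpar : P.length % 2 = Q.length % 2 := by
    have h0 : P[0]'hPpos = Q[0]'hQpos := by
      have := hhead
      rw [List.getElem?_eq_getElem hPpos, List.getElem?_eq_getElem hQpos] at this
      exact Option.some.inj this
    have hl : P[P.length - 1]'(by omega) = Q[Q.length - 1]'(by omega) := by
      have := hlast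
      rw [List.getLast?_eq_getElem?, List.getLast?_eq_getElem?,
        List.getElem?_eq_getElem (by omega), List.getElem?_eq_getElem (by omega)] at this
      exact Option.some.inj this
    have hkP := kind_parity hPA (P.length - 1) (by omega)
    have hkQ := kind_parity hQA (Q.length - 1) (by omega)
    have : ItemKind.flip^[P.length - 1] (S.kind (P[0]'hPpos)) =
        ItemKind.flip^[Q.length - 1] (S.kind (P[0]'hPpos)) := by
      rw [← hkP]
      conv_rhs => rw [h0, ← hkQ, ← hl]
    have := flip_iterate_inj _ this
    omega
  -- Step 2: P.length ≠ Q.length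
  have hne_len : P.length ≠ Q.length := by
    intro heq
    apply hne
    set m := llrsp S P Q with hm
    set n := llrsp S P.reverse Q.reverse with hn
    -- prefix equality
    have hmA : P.take m = Q.take m := by
      by_cases hA : {ℓ | 1 ≤ ℓ ∧ ℓ ≤ P.length ∧ P.take ℓ = Q.take ℓ ∧
          ∀ (σ : Skeleton S) (b : σ.Item), P[0]? = some (σ.classOf b) →
            ∃ x, σ.tset P b (ℓ-1) = {x}}.Nonempty
      · have hbdd : BddAbove {ℓ | 1 ≤ ℓ ∧ ℓ ≤ P.length ∧ P.take ℓ = Q.take ℓ ∧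
          ∀ (σ : Skeleton S) (b : σ.Item), P[0]? = some (σ.classOf b) →
            ∃ x, σ.tset P b (ℓ-1) = {x}} := ⟨P.length, fun ℓ hℓ => hℓ.2.1⟩
        have := Nat.sSup_mem hA hbdd
        exact this.2.2.1
      · have : m = 0 := by
          rw [hm, llrsp, Set.not_nonempty_iff_eq_empty.mp hA, csSup_empty]; rfl
        simp [this]
    have hnA : P.reverse.take n = Q.reverse.take n := by
      by_cases hB : {ℓ | 1 ≤ ℓ ∧ ℓ ≤ P.reverse.length ∧
          P.reverse.take ℓ = Q.reverse.take ℓ ∧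
          ∀ (σ : Skeleton S) (b : σ.Item), P.reverse[0]? = some (σ.classOf b) →
            ∃ x, σ.tset P.reverse b (ℓ-1) = {x}}.Nonempty
      · have hbdd : BddAbove {ℓ | 1 ≤ ℓ ∧ ℓ ≤ P.reverse.length ∧
          P.reverse.take ℓ = Q.reverse.take ℓ ∧
          ∀ (σ : Skeleton S) (b : σ.Item), P.reverse[0]? = some (σ.classOf b) →
            ∃ x, σ.tset P.reverse b (ℓ-1) = {x}} := ⟨P.reverse.length, fun ℓ hℓ => hℓ.2.1⟩
        have := Nat.sSup_mem hB hbdd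
        exact this.2.2.1
      · have : n = 0 := by
          rw [hn, llrsp, Set.not_nonempty_iff_eq_empty.mp hB, csSup_empty]; rfl
        simp [this]
    -- combine
    have hdrop : P.drop m = Q.drop m := by
      have h1 : (P.drop m).reverse = P.reverse.take (P.length - m) := by
        rw [List.reverse_drop]
      have h2 : (Q.drop m).reverse = Q.reverse.take (Q.length - m) := by
        rw [List.reverse_drop]
      have hPm : P.length - m = n := by omega
      have hQm : Q.length - m = n := by omega
      rw [hPm] at h1; rw [hQm] at h2
      have := h1.trans (hnA.trans h2.symm)
      exact List.reverse_injective this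
    calc P = P.take m ++ P.drop m := (List.take_append_drop m P).symm
      _ = Q.take m ++ Q.drop m := by rw [hmA, hdrop]
      _ = Q := List.take_append_drop m Q
  omega
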